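/- Let α be an irrational real number and let x_N := {Nα} be the fractional part of Nα, so (x_N)_{N∈ℕ} is the Kronecker sequence in [0,1). Then for every continuous non-decreasing function f : [0,∞) → [0,∞), the sequence (x_N) does not have f-pair correlations. -/

import Mathlib

/-!
Let `q₀ < q₁ < ⋯` be the successive records of `n ↦ ‖nα‖` (the continued-fraction denominators
of `α`) and `δₗ = ‖qₗα‖`. Since the differences `xᵢ - xⱼ` are `(i - j)α` mod 1 and `δₗ` is the
least of `‖dα‖` over `1 ≤ d < qₗ₊₁`, at `N = qₗ₊₁` no pair is closer than `wₗ/N`, where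
`wₗ = qₗ₊₁δₗ`; on the other hand the pairs `(i, i + qₗ)` give `R(s,N) ≥ 2(N - qₗ)` as soon as
`δₗ ≤ s/N`. The unimodularity `qₗ₊₁δₗ + qₗδₗ₊₁ = 1` of consecutive best approximations puts `wₗ`
in `[1/2, 1]`, and `qₗ + qₗ₊₁ ≤ qₗ₊₂` gives `qₗδₗ ≤ (2/3)wₗ` infinitely often. For `s` slightly
below `limsup wₗ`, `R(s,N)/N` is therefore `0` infinitely often and at least `1/4` infinitely
often, so it has no limit whatever `f` is.
-/

open Filter Set Asymptotics

/-- `nid x` is the distance from `x` to the nearest integer. -/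
noncomputable def nid (x : ℝ) : ℝ := |x - round x|

/-- `pairCount x s N` is the pair counting function
`R(s,N) = #{(i,j) : 1 ≤ i ≠ j ≤ N, ‖x i - x j‖ ≤ s/N}`. -/
noncomputable def pairCount (x : ℕ → ℝ) (s : ℝ) (N : ℕ) : ℕ :=
  {p : ℕ × ℕ | 1 ≤ p.1 ∧ p.1 ≤ N ∧ 1 ≤ p.2 ∧ p.2 ≤ N ∧ p.1 ≠ p.2 ∧
      nid (x p.1 - x p.2) ≤ s / N}.ncard

/-- The sequence `x` has `f`-pair correlations:
`R(s,N)/N → f s` for every `s ≥ 0`. -/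
def HasPairCorr (x : ℕ → ℝ) (f : ℝ → ℝ) : Prop :=
  ∀ s : ℝ, 0 ≤ s →
    Tendsto (fun N : ℕ => (pairCount x s N : ℝ) / N) atTop (nhds (f s))

theorem nid_le_abs_sub_intCast (x : ℝ) (z : ℤ) : nid x ≤ |x - z| := round_le x z

theorem nid_add_intCast (x : ℝ) (z : ℤ) : nid (x + z) = nid x := by
  simp only [nid, round_add_intCast, Int.cast_add, add_sub_add_right_eq_sub]

theorem nid_neg (x : ℝ) : nid (-x) = nid x := by
  have h : ∀ y : ℝ, nid (-y) ≤ nid y := fun y => by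
    have := nid_le_abs_sub_intCast (-y) (-round y)
    rwa [Int.cast_neg, sub_neg_eq_add, neg_add_eq_sub, abs_sub_comm] at this
  exact le_antisymm (h x) (by simpa using h (-x))

theorem nid_fract_sub_fract (a b : ℝ) : nid (Int.fract a - Int.fract b) = nid (a - b) := by
  rw [Int.fract, Int.fract, ← nid_add_intCast _ (⌊a⌋ - ⌊b⌋)]
  push_cast
  ring_nf

theorem nid_pos_of_irrational {y : ℝ} (hy : Irrational y) : 0 < nid y :=
  abs_pos.2 (sub_ne_zero.2 (hy.ne_int _))

theorem nid_le_abs_of_eq_add_intCast {x y : ℝ} (z : ℤ) (h : x = y + z) : nid x ≤ |y| := by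
  simpa [h] using nid_le_abs_sub_intCast x z

def IsRecord {β : Type*} [LinearOrder β] (g : ℕ → β) (q : ℕ) : Prop :=
  0 < q ∧ ∀ d, 0 < d → d < q → g q < g d

section Records

variable {β : Type*} [LinearOrder β] (g : ℕ → β)

theorem exists_isRecord_le {d : ℕ} (hd : 0 < d) : ∃ r, IsRecord g r ∧ r ≤ d ∧ g r ≤ g d := by
  induction d using Nat.strong_induction_on with
  | _ d ih =>
    by_cases h : IsRecord g d
    · exact ⟨d, h, le_rfl, le_rfl⟩
    · obtain ⟨e, he, hed, hge⟩ : ∃ e, 0 < e ∧ e < d ∧ g e ≤ g d := by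
        simpa [IsRecord, hd] using h
      obtain ⟨r, hr, hre, hgr⟩ := ih e hed he
      exact ⟨r, hr, hre.trans hed.le, hgr.trans hge⟩

variable {g}

theorem apply_nth_isRecord_le (hg : (Set.ofPred (IsRecord g)).Infinite) {l d : ℕ} (hd : 0 < d)
    (hdl : d < Nat.nth (IsRecord g) (l + 1)) : g (Nat.nth (IsRecord g) l) ≤ g d := by
  obtain ⟨r, hr, hrd, hgr⟩ := exists_isRecord_le g hd
  refine le_trans ?_ hgr
  rcases (Nat.le_nth_of_lt_nth_succ (hrd.trans_lt hdl) hr).lt_or_eq with hlt | rfl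
  · exact ((Nat.nth_mem_of_infinite hg l).2 r hr.1 hlt).le
  · exact le_rfl

end Records

theorem abs_sub_lt_abs_of_mul_pos {a b : ℝ} (hab : 0 < a * b) (h : |b| < |a|) : |b - a| < |a| := by
  rcases abs_cases a with ⟨ha, ha0⟩ | ⟨ha, ha0⟩ <;>
    rcases abs_cases b with ⟨hb, hb0⟩ | ⟨hb, hb0⟩ <;>
    rw [ha, hb] at h <;> rw [ha, abs_lt] <;> constructor <;> nlinarith

theorem abs_add_sub_lt_abs {a b c : ℝ} (hab : a * b < 0) (hbc : b * c < 0) (hcb : |c| < |b|)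
    (hba : |b| < |a|) : |a + b - c| < |a| := by
  rcases abs_cases a with ⟨ha, ha0⟩ | ⟨ha, ha0⟩ <;>
    rcases abs_cases b with ⟨hb, hb0⟩ | ⟨hb, hb0⟩ <;>
    rcases abs_cases c with ⟨hc, hc0⟩ | ⟨hc, hc0⟩ <;>
    simp only [ha, hb, hc] at hcb hba <;> rw [ha, abs_lt] <;> constructor <;> nlinarith

theorem nid_fract_natCast_mul_sub (α : ℝ) {i j : ℕ} (h : j ≤ i) :
    nid (Int.fract (i * α) - Int.fract (j * α)) = nid ((i - j : ℕ) * α) := by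
  rw [nid_fract_sub_fract, Nat.cast_sub h, sub_mul]

theorem pairCount_kronecker_eq_zero {α s : ℝ} {N : ℕ}
    (h : ∀ d, 0 < d → d < N → s / N < nid (d * α)) :
    pairCount (fun n : ℕ => Int.fract (n * α)) s N = 0 := by
  have key : ∀ i j : ℕ, j < i → i ≤ N → 1 ≤ j →
      s / N < nid (Int.fract (i * α) - Int.fract (j * α)) := fun i j hji hi hj => by
    rw [nid_fract_natCast_mul_sub α hji.le]
    exact h _ (by omega) (by omega)
  rw [pairCount, Set.ncard_eq_zero (hs := (Set.finite_Icc (1, 1) (N, N)).subset ?_)]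
  · refine Set.eq_empty_of_forall_notMem ?_
    rintro ⟨i, j⟩ ⟨hi, hiN, hj, hjN, hij, hle⟩
    rcases hij.lt_or_gt with hlt | hlt
    · rw [← nid_neg, neg_sub] at hle
      exact (key j i hlt hjN hi).not_ge hle
    · exact (key i j hlt hiN hj).not_ge hle
  · rintro ⟨i, j⟩ ⟨hi, hiN, hj, hjN, -⟩
    exact ⟨⟨hi, hj⟩, hiN, hjN⟩

theorem two_mul_sub_le_pairCount_kronecker {α s : ℝ} {N d : ℕ} (hd : 0 < d)
    (h : nid (d * α) ≤ s / N) :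
    2 * (N - d) ≤ pairCount (fun n : ℕ => Int.fract (n * α)) s N := by
  let F : Finset (Bool × ℕ) := Finset.univ ×ˢ Finset.Icc 1 (N - d)
  let φ : Bool × ℕ → ℕ × ℕ := fun p => bif p.1 then (p.2 + d, p.2) else (p.2, p.2 + d)
  have hclose : ∀ i : ℕ, nid (Int.fract (((i + d : ℕ) : ℝ) * α) - Int.fract (i * α)) ≤ s / N :=
    fun i => by rwa [nid_fract_natCast_mul_sub α (Nat.le_add_right i d), Nat.add_sub_cancel_left]
  have hcard : F.card = 2 * (N - d) := by simp [F]
  rw [← hcard, ← Set.ncard_coe_finset]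
  refine Set.ncard_le_ncard_of_injOn φ ?_ ?_ ((Set.finite_Icc (1, 1) (N, N)).subset ?_)
  · rintro ⟨b, i⟩ hi
    simp only [F, Finset.coe_product, Finset.coe_univ, Finset.coe_Icc, Set.mem_prod,
      Set.mem_univ, Set.mem_Icc, true_and] at hi
    cases b <;> simp only [φ, cond_false, cond_true]
    · refine ⟨hi.1, by omega, by omega, by omega, by omega, ?_⟩
      rw [← nid_neg, neg_sub]
      exact hclose i
    · exact ⟨by omega, by omega, hi.1, by omega, by omega, hclose i⟩
  · rintro ⟨b, i⟩ - ⟨b', i'⟩ - h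
    cases b <;> cases b' <;> simp only [φ, cond_false, cond_true, Prod.mk.injEq] at h ⊢ <;>
      obtain ⟨h₁, h₂⟩ := h <;> constructor <;> first | trivial | omega
  · rintro ⟨i, j⟩ ⟨hi, hiN, hj, hjN, -⟩
    exact ⟨⟨hi, hj⟩, hiN, hjN⟩

theorem HasPairCorr.le_apply_of_frequently {x : ℕ → ℝ} {f : ℝ → ℝ} (h : HasPairCorr x f)
    {s c : ℝ} (hs : 0 ≤ s) (hc : ∃ᶠ N in atTop, c ≤ (pairCount x s N : ℝ) / N) : c ≤ f s :=
  isClosed_Ici.mem_of_frequently_of_tendsto hc (h s hs)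

theorem HasPairCorr.apply_le_of_frequently {x : ℕ → ℝ} {f : ℝ → ℝ} (h : HasPairCorr x f)
    {s c : ℝ} (hs : 0 ≤ s) (hc : ∃ᶠ N in atTop, (pairCount x s N : ℝ) / N ≤ c) : f s ≤ c :=
  isClosed_Iic.mem_of_frequently_of_tendsto hc (h s hs)

theorem exists_quarter_le_pairCount_kronecker_div {α s : ℝ} {d : ℕ} (hd : 7 ≤ d)
    (hδ : 0 < nid (d * α)) (h : d * nid (d * α) ≤ 7 / 9 * s) :
    ∃ N ≥ d, 1 / 4 ≤ (pairCount (fun n : ℕ => Int.fract (n * α)) s N : ℝ) / N := by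
  set N := ⌊s / nid (d * α)⌋₊
  have hd' : (7 : ℝ) ≤ d := by exact_mod_cast hd
  have hsδ : 9 / 7 * (d : ℝ) ≤ s / nid (d * α) := by rw [le_div_iff₀ hδ]; linarith
  have hNδ : (N : ℝ) ≤ s / nid (d * α) := Nat.floor_le (le_trans (by positivity) hsδ)
  have hdN : 8 * (d : ℝ) < 7 * N := by linarith [Nat.lt_floor_add_one (s / nid (d * α))]
  have hNpos : (0 : ℝ) < N := by linarith
  have hdN' : d ≤ N := by exact_mod_cast (by linarith : (d : ℝ) ≤ N)
  refine ⟨N, hdN', ?_⟩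
  have hpairs : ((2 * (N - d) : ℕ) : ℝ) ≤ pairCount (fun n : ℕ => Int.fract (n * α)) s N := by
    exact_mod_cast two_mul_sub_le_pairCount_kronecker (by omega)
      (by rwa [le_div_iff₀ hNpos, ← le_div_iff₀' hδ])
  rw [Nat.cast_mul, Nat.cast_sub hdN'] at hpairs
  rw [le_div_iff₀ hNpos]
  push_cast at hpairs
  linarith

theorem exists_frequently_lt_and_frequently_le {w u : ℕ → ℝ} {c : ℝ} (hc : 0 < c)
    (hcw : ∀ l, c ≤ w l) (hw : BddAbove (Set.range w))
    (hu : ∃ᶠ l in atTop, u l ≤ 2 / 3 * w l) :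
    ∃ s, 0 < s ∧ (∃ᶠ l in atTop, s < w l) ∧ ∃ᶠ l in atTop, u l ≤ 7 / 9 * s := by
  have hbdd : IsBoundedUnder (· ≤ ·) atTop w := hw.isBoundedUnder_of_range
  set W := limsup w atTop
  have hW : c ≤ W := le_limsup_of_frequently_le (Frequently.of_forall hcw) hbdd
  refine ⟨9 / 10 * W, by linarith,
    frequently_lt_of_lt_limsup (isCoboundedUnder_le_of_le atTop hcw) (by linarith), ?_⟩
  have hev : ∀ᶠ l in atTop, w l < 21 / 20 * W := eventually_lt_of_limsup_lt (by linarith) hbdd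
  exact (hu.and_eventually hev).mono fun l ⟨h₁, h₂⟩ => by linarith

noncomputable def recordDenom (α : ℝ) : ℕ → ℕ :=
  Nat.nth (IsRecord fun d : ℕ => nid (d * α))

noncomputable def recordErr (α : ℝ) (l : ℕ) : ℝ :=
  recordDenom α l * α - round (recordDenom α l * α : ℝ)

theorem abs_recordErr (α : ℝ) (l : ℕ) : |recordErr α l| = nid (recordDenom α l * α) := rfl

section RecordDenom

variable {α : ℝ} (hα : Irrational α)
include hα

theorem infinite_isRecord_nid : (Set.ofPred (IsRecord fun d : ℕ => nid (d * α))).Infinite := by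
  refine Set.infinite_of_forall_exists_gt fun a => ?_
  set m := (Finset.Icc 1 (a + 1)).inf' ⟨1, by simp⟩ fun d : ℕ => nid (d * α)
  have hm : 0 < m := (Finset.lt_inf'_iff _).2 fun d hd =>
    nid_pos_of_irrational (hα.natCast_mul (by simp at hd; omega))
  obtain ⟨K, hK⟩ := exists_nat_one_div_lt hm
  obtain ⟨k, hk, -, hkK⟩ := Real.exists_nat_abs_mul_sub_round_le α K.succ_pos
  obtain ⟨r, hr, -, hrk⟩ := exists_isRecord_le (fun d : ℕ => nid (d * α)) hk
  refine ⟨r, hr, lt_of_not_ge fun hra => ?_⟩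
  have hmr : m ≤ nid (r * α) := Finset.inf'_le _ (Finset.mem_Icc.2 ⟨hr.1, by omega⟩)
  have hK' : 1 / ((K.succ : ℝ) + 1) ≤ 1 / (K + 1) := by gcongr; simp
  change nid (k * α) ≤ _ at hkK
  linarith

theorem recordDenom_strictMono : StrictMono (recordDenom α) :=
  Nat.nth_strictMono (infinite_isRecord_nid hα)

theorem recordDenom_lt_succ (l : ℕ) : recordDenom α l < recordDenom α (l + 1) :=
  recordDenom_strictMono hα (Nat.lt_add_one l)

theorem isRecord_recordDenom (l : ℕ) : IsRecord (fun d : ℕ => nid (d * α)) (recordDenom α l) :=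
  Nat.nth_mem_of_infinite (infinite_isRecord_nid hα) l

theorem recordDenom_pos (l : ℕ) : 0 < recordDenom α l := (isRecord_recordDenom hα l).1

theorem nid_recordDenom_pos (l : ℕ) : 0 < nid (recordDenom α l * α) :=
  nid_pos_of_irrational (hα.natCast_mul (recordDenom_pos hα l).ne')

theorem nid_recordDenom_le {l d : ℕ} (hd : 0 < d) (hdl : d < recordDenom α (l + 1)) :
    nid (recordDenom α l * α) ≤ nid (d * α) :=
  apply_nth_isRecord_le (infinite_isRecord_nid hα) hd hdl

theorem nid_recordDenom_succ_lt (l : ℕ) :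
    nid (recordDenom α (l + 1) * α) < nid (recordDenom α l * α) :=
  (isRecord_recordDenom hα (l + 1)).2 _ (recordDenom_pos hα l) (recordDenom_lt_succ hα l)

theorem recordErr_ne_zero (l : ℕ) : recordErr α l ≠ 0 :=
  abs_pos.1 (nid_recordDenom_pos hα l)

theorem recordDenom_succ_mul_nid_le_one (l : ℕ) :
    (recordDenom α (l + 1) : ℝ) * nid (recordDenom α l * α) ≤ 1 := by
  set q := recordDenom α (l + 1)
  have hq : 1 < q := by
    have := recordDenom_lt_succ hα l; have := recordDenom_pos hα l; omega
  obtain ⟨k, hk, hkq, hdir⟩ := Real.exists_nat_abs_mul_sub_round_le α (n := q - 1) (by omega)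
  have hcast : ((q - 1 : ℕ) : ℝ) + 1 = q := by rw [Nat.cast_sub hq.le]; ring
  rw [hcast] at hdir
  rw [← le_div_iff₀' (by positivity)]
  exact (nid_recordDenom_le hα hk (by omega)).trans hdir

theorem recordErr_mul_recordErr_succ_neg (l : ℕ) : recordErr α l * recordErr α (l + 1) < 0 := by
  set q := recordDenom α l
  set q' := recordDenom α (l + 1)
  have hqq' : q < q' := recordDenom_lt_succ hα l
  by_contra! hpos
  have hne := mul_ne_zero (recordErr_ne_zero hα l) (recordErr_ne_zero hα (l + 1))
  have hclose : nid ((q' - q : ℕ) * α) ≤ |recordErr α (l + 1) - recordErr α l| := by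
    refine nid_le_abs_of_eq_add_intCast (round (q' * α : ℝ) - round (q * α : ℝ)) ?_
    rw [Nat.cast_sub hqq'.le, recordErr, recordErr]
    push_cast
    ring
  have hlt := abs_sub_lt_abs_of_mul_pos (lt_of_le_of_ne hpos hne.symm)
    (by rw [abs_recordErr, abs_recordErr]; exact nid_recordDenom_succ_lt hα l)
  rw [abs_recordErr] at hlt
  have := recordDenom_pos hα l
  have := nid_recordDenom_le hα (l := l) (d := q' - q) (by omega) (by omega)
  linarith

theorem recordDenom_succ_mul_nid_add_recordDenom_mul_nid_succ (l : ℕ) :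
    (recordDenom α (l + 1) : ℝ) * nid (recordDenom α l * α)
      + recordDenom α l * nid (recordDenom α (l + 1) * α) = 1 := by
  set q : ℝ := (recordDenom α l : ℝ)
  set q' : ℝ := (recordDenom α (l + 1) : ℝ)
  set e := recordErr α l
  set e' := recordErr α (l + 1)
  have hq : 0 < q := by simpa [q] using recordDenom_pos hα l
  have hqq' : q < q' := by simpa [q, q'] using recordDenom_lt_succ hα l
  -- the determinant of the lattice vectors `(q, round (q α))` and `(q', round (q' α))`
  set D : ℤ := recordDenom α l * round (q' * α) - recordDenom α (l + 1) * round (q * α)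
  have hD : (D : ℝ) = q' * e - q * e' := by
    simp only [D, e, e', recordErr]; push_cast; ring
  have habsD : |(D : ℝ)| = q' * |e| + q * |e'| := by
    have hee := recordErr_mul_recordErr_succ_neg hα l
    have hq' := hq.trans hqq'
    rw [hD, sub_eq_add_neg, (abs_add_eq_add_abs_iff _ _).2 ?_, abs_neg, abs_mul, abs_mul,
      abs_of_pos hq, abs_of_pos hq']
    rcases le_total 0 e with h | h
    · exact .inl ⟨by positivity, by nlinarith⟩
    · exact .inr ⟨by nlinarith, by nlinarith⟩
  have hw : q' * |e| ≤ 1 := recordDenom_succ_mul_nid_le_one hα l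
  have hw0 : 0 < q' * |e| := mul_pos (hq.trans hqq') (nid_recordDenom_pos hα l)
  have hu : q * |e'| < q' * |e| :=
    mul_lt_mul'' hqq' (nid_recordDenom_succ_lt hα l) hq.le (abs_nonneg _)
  have hD1 : |D| = 1 := by
    have h0 : (0 : ℝ) < ((|D| : ℤ) : ℝ) := by rw [Int.cast_abs, habsD]; positivity
    have h2 : ((|D| : ℤ) : ℝ) < 2 := by rw [Int.cast_abs, habsD]; linarith
    have : 0 < |D| := by exact_mod_cast h0
    have : |D| < 2 := by exact_mod_cast h2
    omega
  rw [← abs_recordErr, ← abs_recordErr, ← habsD, ← Int.cast_abs, hD1, Int.cast_one]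

theorem recordDenom_add_recordDenom_succ_le (l : ℕ) :
    recordDenom α l + recordDenom α (l + 1) ≤ recordDenom α (l + 2) := by
  set q := recordDenom α l
  set q' := recordDenom α (l + 1)
  set q'' := recordDenom α (l + 2)
  have h' : q' < q'' := recordDenom_lt_succ hα _
  by_contra! h
  have hclose : nid ((q + q' - q'' : ℕ) * α) ≤
      |recordErr α l + recordErr α (l + 1) - recordErr α (l + 2)| := by
    refine nid_le_abs_of_eq_add_intCast
      (round (q * α : ℝ) + round (q' * α : ℝ) - round (q'' * α : ℝ)) ?_
    rw [Nat.cast_sub h.le, recordErr, recordErr, recordErr]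
    push_cast
    ring
  have hlt := abs_add_sub_lt_abs (recordErr_mul_recordErr_succ_neg hα l)
    (recordErr_mul_recordErr_succ_neg hα (l + 1))
    (by rw [abs_recordErr, abs_recordErr]; exact nid_recordDenom_succ_lt hα _)
    (by rw [abs_recordErr, abs_recordErr]; exact nid_recordDenom_succ_lt hα _)
  rw [abs_recordErr] at hlt
  have := (isRecord_recordDenom hα l).2 (q + q' - q'') (by omega) (by omega)
  linarith

theorem frequently_three_mul_recordDenom_le :
    ∃ᶠ l in atTop, 3 * recordDenom α l ≤ 2 * recordDenom α (l + 1) := by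
  refine frequently_atTop.2 fun a => ?_
  by_cases h : 3 * recordDenom α a ≤ 2 * recordDenom α (a + 1)
  · exact ⟨a, le_rfl, h⟩
  · have := recordDenom_add_recordDenom_succ_le hα a
    exact ⟨a + 1, a.le_succ, show 3 * recordDenom α (a + 1) ≤ 2 * recordDenom α (a + 2) by omega⟩

theorem half_le_recordDenom_succ_mul_nid (l : ℕ) :
    1 / 2 ≤ (recordDenom α (l + 1) : ℝ) * nid (recordDenom α l * α) := by
  have hid := recordDenom_succ_mul_nid_add_recordDenom_mul_nid_succ hα l
  have : (recordDenom α l : ℝ) * nid (recordDenom α (l + 1) * α)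
      ≤ recordDenom α (l + 1) * nid (recordDenom α l * α) :=
    mul_le_mul (by exact_mod_cast (recordDenom_lt_succ hα l).le)
      (nid_recordDenom_succ_lt hα l).le (abs_nonneg _) (Nat.cast_nonneg _)
  linarith

theorem frequently_recordDenom_mul_nid_le :
    ∃ᶠ l in atTop, (recordDenom α l : ℝ) * nid (recordDenom α l * α)
      ≤ 2 / 3 * ((recordDenom α (l + 1) : ℝ) * nid (recordDenom α l * α)) :=
  (frequently_three_mul_recordDenom_le hα).mono fun l hl => by
    have : (3 * recordDenom α l : ℝ) ≤ 2 * recordDenom α (l + 1) := by exact_mod_cast hl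
    nlinarith [nid_recordDenom_pos hα l]

theorem frequently_pairCount_kronecker_eq_zero {s : ℝ}
    (h : ∃ᶠ l in atTop, s < (recordDenom α (l + 1) : ℝ) * nid (recordDenom α l * α)) :
    ∃ᶠ N in atTop, pairCount (fun n : ℕ => Int.fract (n * α)) s N = 0 := by
  refine Tendsto.frequently (f := fun l => recordDenom α (l + 1))
    ((recordDenom_strictMono hα).tendsto_atTop.comp (tendsto_add_atTop_nat 1))
    (h.mono fun l hl => pairCount_kronecker_eq_zero fun d hd hdl => ?_)
  have hq : (0 : ℝ) < recordDenom α (l + 1) := by exact_mod_cast recordDenom_pos hα (l + 1)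
  rw [div_lt_iff₀ hq, mul_comm]
  exact hl.trans_le (mul_le_mul_of_nonneg_left (nid_recordDenom_le hα hd hdl) hq.le)

theorem frequently_quarter_le_pairCount_kronecker_div {s : ℝ}
    (h : ∃ᶠ l in atTop, (recordDenom α l : ℝ) * nid (recordDenom α l * α) ≤ 7 / 9 * s) :
    ∃ᶠ N in atTop, 1 / 4 ≤ (pairCount (fun n : ℕ => Int.fract (n * α)) s N : ℝ) / N := by
  refine frequently_atTop.2 fun M => ?_
  obtain ⟨l, hl, hle⟩ := frequently_atTop.1 h (max M 7)
  have hlq : l ≤ recordDenom α l := (recordDenom_strictMono hα).id_le l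
  obtain ⟨N, hN, hquarter⟩ :=
    exists_quarter_le_pairCount_kronecker_div (by omega) (nid_recordDenom_pos hα l) hle
  exact ⟨N, by omega, hquarter⟩

end RecordDenom

/-- For irrational `α`, the Kronecker sequence `x N = {N α}` does not
have `f`-pair correlations for any continuous non-decreasing `f : [0,∞) → [0,∞)`. -/
theorem statement11 (α : ℝ) (hα : Irrational α)
    (x : ℕ → ℝ) (hx : ∀ N : ℕ, x N = Int.fract (N * α)) :
    ∀ f : ℝ → ℝ, (∀ s : ℝ, 0 ≤ s → 0 ≤ f s) →
      ContinuousOn f (Ici 0) → MonotoneOn f (Ici 0) →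
      ¬ HasPairCorr x f := by
  obtain rfl : x = fun N : ℕ => Int.fract (N * α) := funext hx
  intro f _ _ _ hf
  obtain ⟨s, hs, hgap, hcluster⟩ := exists_frequently_lt_and_frequently_le one_half_pos
    (half_le_recordDenom_succ_mul_nid hα)
    ⟨1, Set.forall_mem_range.2 (recordDenom_succ_mul_nid_le_one hα)⟩
    (frequently_recordDenom_mul_nid_le hα)
  have hzero : f s ≤ 0 := hf.apply_le_of_frequently hs.le
    ((frequently_pairCount_kronecker_eq_zero hα hgap).mono fun N hN => by simp [hN])
  have hpos : 1 / 4 ≤ f s :=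
    hf.le_apply_of_frequently hs.le (frequently_quarter_le_pairCount_kronecker_div hα hcluster)
  linarith
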